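/- There exists a constant c > 0 (depending only on λ = sup_k m_k) with the following property. Let n ∈ ℕ_+ have Vilenkin expansion n = ∑_{i=1}^{s} ∑_{k=l_i}^{m_i} n_k M_k, i.e. the digits n_k of n are nonzero exactly for k lying in the blocks [l_1, m_1], …, [l_s, m_s], where 0 ≤ l_1 ≤ m_1, and l_i ≤ m_i and m_{i−1} ≤ l_i − 2 for 2 ≤ i ≤ s (consecutive blocks are separated by a gap of at least two positions). Then for every index i with l_i ≥ 1 and every x ∈ I_{l_i+1}(e_{l_i−1} + e_{l_i}) one has n · |K_n(x)| ≥ c · M_{l_i}^2. -/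

import Mathlib

/-!
Since `∑_{j<n} D_j = ∑_{j<n} (n - 1 - j) ψ_j`, only the values `ψ_j(x)` matter. Put `k = l_i - 1`
and `P = M_k`. As `x` vanishes below coordinate `k`, `ψ_j(x)` is constant on blocks of `P`
consecutive indices. Since the `k`-th digit of `n` is zero, `n = (B m_{k+1} + d) m_k P + r` with
`r < P` and `d ≠ 0` the `(k+1)`-th digit of `n`. Moreover
`ψ_{P(b m_k + a)}(x) = ζ^a ψ_{M_{k+1} b}(x)`, where `ζ = r_k(x) = exp(2πi/m_k)` is a primitive root
of unity. So whole periods cancel and the sum collapses to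
`(r(r-1)/2) ψ_{n-r}(x) - P² (∑_{a<m_k} a ζ^a) ψ_{M_{k+2} B}(x) ∑_{a<d} ζ'^a`
with `ζ' = exp(2πi/m_{k+1})`. The last two sums have
modulus at least `m_k/2 ≥ 1` and `1`, which gives `n |K_n(x)| ≥ P²/2 ≥ M_{l_i}²/(2λ²)`.
-/

open Finset
open scoped ENNReal NNReal

noncomputable section

namespace Vilenkin

/-- The generalized powers `M_0 = 1`, `M_{k+1} = m_k M_k`. -/
def M (m : ℕ → ℕ) : ℕ → ℕ
  | 0 => 1
  | k + 1 => m k * M m k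

/-- The `j`-th digit of `n` in the mixed-radix system determined by `m`. -/
def digit (m : ℕ → ℕ) (n j : ℕ) : ℕ := (n / M m j) % m j

/-- The Vilenkin group `G_m`, the complete direct product of the cyclic groups `Z_{m_k}`. -/
abbrev G (m : ℕ → ℕ) : Type := ∀ k : ℕ, ZMod (m k)

instance (n : ℕ) : MeasurableSpace (ZMod n) := ⊤

/-- The generalized Rademacher functions `r_k(x) = exp(2 π i x_k / m_k)`. -/
def rad (m : ℕ → ℕ) (k : ℕ) (x : G m) : ℂ :=
  Complex.exp (2 * Real.pi * Complex.I * ((x k).val : ℂ) / (m k : ℂ))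

/-- The Vilenkin system `ψ_n = ∏_k r_k^{n_k}` (the product is finite). -/
def psi (m : ℕ → ℕ) (n : ℕ) (x : G m) : ℂ :=
  ∏ j ∈ Finset.range (n + 1), rad m j x ^ digit m n j

/-- The Dirichlet kernels `D_n = ∑_{k=0}^{n-1} ψ_k`. -/
def D (m : ℕ → ℕ) (n : ℕ) (x : G m) : ℂ :=
  ∑ k ∈ Finset.range n, psi m k x

/-- The Fejér kernels `K_n = (1/n) ∑_{k=0}^{n-1} D_k`. -/
def K (m : ℕ → ℕ) (n : ℕ) (x : G m) : ℂ :=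
  (n : ℂ)⁻¹ * ∑ k ∈ Finset.range n, D m k x

/-- The cylinder `I_n(x) = {y : y_j = x_j for j < n}`. -/
def cyl (m : ℕ → ℕ) (n : ℕ) (x : G m) : Set (G m) := {y | ∀ j < n, y j = x j}

/-- The element `e_n` with `n`-th coordinate `1` and all other coordinates `0`. -/
def e (m : ℕ → ℕ) (n : ℕ) : G m := fun k => if k = n then 1 else 0

section BlockSums

variable {R : Type*} [CommRing R]

theorem sum_range_mul_eq_sum_sum (f : ℕ → R) (N P : ℕ) :
    ∑ j ∈ range (N * P), f j = ∑ q ∈ range N, ∑ t ∈ range P, f (q * P + t) := by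
  induction N with
  | zero => simp
  | succ N ih => rw [Nat.succ_mul, sum_range_add, ih, sum_range_succ]

theorem sum_range_sum_range_eq_sum_mul (f : ℕ → R) (n : ℕ) :
    ∑ k ∈ range n, ∑ j ∈ range k, f j = ∑ j ∈ range n, ((n : R) - 1 - j) * f j := by
  induction n with
  | zero => simp
  | succ n ih =>
    rw [sum_range_succ, ih, sum_range_succ _ n, ← sum_add_distrib]
    push_cast
    rw [show (n : R) + 1 - 1 - n = 0 by ring, zero_mul, add_zero]
    exact sum_congr rfl fun j _ => by ring

theorem sum_range_sum_range_of_block_const {f g : ℕ → R} {P : ℕ}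
    (hf : ∀ q, ∀ t < P, f (q * P + t) = g q) {N r : ℕ} (hr : r ≤ P)
    (hg : ∑ q ∈ range N, g q = 0) :
    ∑ k ∈ range (N * P + r), ∑ j ∈ range k, f j
      = (∑ t ∈ range r, (t : R)) * g N - (P : R) ^ 2 * ∑ q ∈ range N, (q : R) * g q := by
  rw [sum_range_sum_range_eq_sum_mul, sum_range_add, sum_range_mul_eq_sum_sum]
  have hblock : ∀ q ∈ range N,
      ∑ t ∈ range P, (((N * P + r : ℕ) : R) - 1 - ↑(q * P + t)) * f (q * P + t)
        = ((P : R) * ((N * P + r : ℕ) - 1) - ∑ t ∈ range P, (t : R)) * g q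
          - (P : R) ^ 2 * ((q : R) * g q) := by
    intro q _
    rw [sum_congr rfl fun t ht => by rw [hf q t (mem_range.mp ht)], ← sum_mul]
    push_cast
    simp only [sub_add_eq_sub_sub, sum_sub_distrib, sum_const, card_range, nsmul_eq_mul]
    ring
  have htail : ∑ t ∈ range r, (((N * P + r : ℕ) : R) - 1 - ↑(N * P + t)) * f (N * P + t)
      = (∑ t ∈ range r, (t : R)) * g N := by
    rw [sum_congr rfl fun t ht => by rw [hf N t ((mem_range.mp ht).trans_le hr)], ← sum_mul,
      ← sum_range_reflect]
    refine congrArg (· * g N) (sum_congr rfl fun t ht => ?_)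
    have htr := mem_range.mp ht
    push_cast [Nat.cast_sub (by omega : t ≤ r - 1), Nat.cast_sub (by omega : 1 ≤ r)]
    ring
  rw [sum_congr rfl hblock, sum_sub_distrib, ← mul_sum, ← mul_sum, hg, mul_zero, zero_sub,
    htail]
  ring

variable {g h : ℕ → R} {z : R} {m : ℕ}

theorem sum_range_mul_add_of_eq_pow_mul (hgh : ∀ b, ∀ a < m, g (b * m + a) = z ^ a * h b)
    (hz : ∑ a ∈ range m, z ^ a = 0) (B : ℕ) {d : ℕ} (hd : d ≤ m) :
    ∑ q ∈ range (B * m + d), g q = h B * ∑ a ∈ range d, z ^ a := by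
  rw [sum_range_add, sum_range_mul_eq_sum_sum]
  have hblock : ∀ b ∈ range B, ∑ a ∈ range m, g (b * m + a) = 0 := fun b _ => by
    rw [sum_congr rfl fun a ha => hgh b a (mem_range.mp ha), ← sum_mul, hz, zero_mul]
  rw [sum_congr rfl hblock, sum_const_zero, zero_add,
    sum_congr rfl fun a ha => hgh B a ((mem_range.mp ha).trans_le hd), ← sum_mul, mul_comm]

theorem sum_range_mul_natCast_mul_of_eq_pow_mul
    (hgh : ∀ b, ∀ a < m, g (b * m + a) = z ^ a * h b) (hz : ∑ a ∈ range m, z ^ a = 0) (N : ℕ) :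
    ∑ q ∈ range (N * m), (q : R) * g q
      = (∑ a ∈ range m, (a : R) * z ^ a) * ∑ b ∈ range N, h b := by
  rw [sum_range_mul_eq_sum_sum, mul_sum]
  refine sum_congr rfl fun b _ => ?_
  have hterm : ∀ a ∈ range m, ((b * m + a : ℕ) : R) * g (b * m + a)
      = (b : R) * m * h b * z ^ a + (a : R) * z ^ a * h b := fun a ha => by
    rw [hgh b a (mem_range.mp ha)]
    push_cast
    ring
  rw [sum_congr rfl hterm, sum_add_distrib, ← mul_sum, hz, mul_zero, zero_add, sum_mul]

end BlockSums

section Digits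

variable {m : ℕ → ℕ}

theorem M_dvd_M {j k : ℕ} (h : j ≤ k) : M m j ∣ M m k := by
  induction k, h using Nat.le_induction with
  | base => exact dvd_rfl
  | succ k _ ih => exact ih.mul_left (m k)

theorem digit_eq_zero_of_lt {n j : ℕ} (h : n < M m j) : digit m n j = 0 := by
  simp [digit, Nat.div_eq_of_lt h]

variable (hm : ∀ k, 2 ≤ m k)
include hm

theorem lt_M_self (k : ℕ) : k < M m k := by
  induction k with
  | zero => exact Nat.one_pos
  | succ k ih => have := hm k; simp only [M]; nlinarith

theorem M_pos (k : ℕ) : 0 < M m k := (Nat.zero_le k).trans_lt (lt_M_self hm k)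

theorem M_le_M {j k : ℕ} (h : j ≤ k) : M m j ≤ M m k :=
  Nat.le_of_dvd (M_pos hm k) (M_dvd_M h)

theorem digit_M_mul_of_lt {j k : ℕ} (hjk : j < k) (q : ℕ) : digit m (M m k * q) j = 0 := by
  obtain ⟨c, hc⟩ : M m (j + 1) ∣ M m k := M_dvd_M hjk
  rw [digit, hc, M, show m j * M m j * c * q = M m j * (m j * (c * q)) by ring,
    Nat.mul_div_cancel_left _ (M_pos hm j), Nat.mul_mod_right]

theorem digit_add_M_mul {t k : ℕ} (ht : t < M m k) (q j : ℕ) :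
    digit m (t + M m k * q) j = digit m t j + digit m (M m k * q) j := by
  rcases lt_or_ge j k with hjk | hkj
  · obtain ⟨c, hc⟩ : M m (j + 1) ∣ M m k := M_dvd_M hjk
    rw [digit_M_mul_of_lt hm hjk, add_zero, digit, digit, hc, M,
      show m j * M m j * c * q = M m j * (m j * (c * q)) by ring,
      Nat.add_mul_div_left _ _ (M_pos hm j), Nat.add_mul_mod_self_left]
  · obtain ⟨c, hc⟩ : M m k ∣ M m j := M_dvd_M hkj
    have hMk := M_pos hm k
    rw [digit_eq_zero_of_lt (ht.trans_le (M_le_M hm hkj)), zero_add, digit, digit, hc,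
      ← Nat.div_div_eq_div_mul, ← Nat.div_div_eq_div_mul, Nat.add_mul_div_left _ _ hMk,
      Nat.div_eq_of_lt ht, zero_add, Nat.mul_div_cancel_left _ hMk]

theorem digit_M_mul {k a : ℕ} (ha : a < m k) (j : ℕ) :
    digit m (M m k * a) j = if j = k then a else 0 := by
  rcases lt_trichotomy j k with hjk | rfl | hkj
  · rw [if_neg hjk.ne, digit_M_mul_of_lt hm hjk]
  · rw [if_pos rfl, digit, Nat.mul_div_cancel_left _ (M_pos hm j), Nat.mod_eq_of_lt ha]
  · rw [if_neg hkj.ne', digit_eq_zero_of_lt]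
    calc M m k * a < M m k * m k := Nat.mul_lt_mul_of_pos_left ha (M_pos hm k)
      _ = M m (k + 1) := by rw [M, mul_comm]
      _ ≤ M m j := M_le_M hm hkj

end Digits

section Characters

variable {m : ℕ → ℕ}

theorem norm_rad (k : ℕ) (x : G m) : ‖rad m k x‖ = 1 := by
  rw [rad, Complex.norm_exp]
  simp

theorem norm_psi (n : ℕ) (x : G m) : ‖psi m n x‖ = 1 := by
  simp [psi, norm_rad]

theorem rad_of_eq_zero {k : ℕ} {x : G m} (hx : x k = 0) : rad m k x = 1 := by
  simp [rad, hx]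

theorem rad_of_eq_one {k : ℕ} (hk : 2 ≤ m k) {x : G m} (hx : x k = 1) :
    rad m k x = Complex.exp (2 * Real.pi * Complex.I / m k) := by
  rw [rad, hx, ZMod.val_one_eq_one_mod, Nat.mod_eq_of_lt hk, Nat.cast_one, mul_one]

theorem isPrimitiveRoot_rad {k : ℕ} (hk : 2 ≤ m k) {x : G m} (hx : x k = 1) :
    IsPrimitiveRoot (rad m k x) (m k) := by
  rw [rad_of_eq_one hk hx]
  exact Complex.isPrimitiveRoot_exp _ (by omega)

variable (hm : ∀ k, 2 ≤ m k)
include hm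

theorem psi_eq_prod_range {n R : ℕ} (hR : n < R) (x : G m) :
    psi m n x = ∏ j ∈ range R, rad m j x ^ digit m n j := by
  refine prod_subset (range_subset_range.mpr hR) fun j hjR hjn => ?_
  have hnj : n < j := by simp only [mem_range] at hjR hjn; omega
  rw [digit_eq_zero_of_lt (hnj.trans (lt_M_self hm j)), pow_zero]

theorem psi_add_M_mul {t k : ℕ} (ht : t < M m k) (q : ℕ) (x : G m) :
    psi m (t + M m k * q) x = psi m t x * psi m (M m k * q) x := by
  set R := t + M m k * q + 1
  rw [psi_eq_prod_range hm (R := R) (by omega), psi_eq_prod_range hm (n := t) (R := R) (by omega),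
    psi_eq_prod_range hm (n := M m k * q) (R := R) (by omega), ← prod_mul_distrib]
  simp only [digit_add_M_mul hm ht, pow_add]

theorem psi_M_mul {k a : ℕ} (ha : a < m k) (x : G m) : psi m (M m k * a) x = rad m k x ^ a := by
  have hk : k < M m k * a + k + 1 := by omega
  rw [psi_eq_prod_range hm (by omega : M m k * a < M m k * a + k + 1)]
  simp only [digit_M_mul hm ha, pow_ite, pow_zero]
  rw [prod_ite_eq' _ _ (fun j => rad m j x ^ a), if_pos (mem_range.mpr hk)]

theorem psi_M_mul_add {k a : ℕ} (ha : a < m k) (b : ℕ) (x : G m) :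
    psi m (M m k * (b * m k + a)) x = rad m k x ^ a * psi m (M m (k + 1) * b) x := by
  have hlt : M m k * a < M m (k + 1) := by
    rw [M, mul_comm (m k)]; exact Nat.mul_lt_mul_of_pos_left ha (M_pos hm k)
  rw [show M m k * (b * m k + a) = M m k * a + M m (k + 1) * b by rw [M]; ring,
    psi_add_M_mul hm hlt, psi_M_mul hm ha]

theorem psi_eq_one_of_lt {k t : ℕ} (ht : t < M m k) {x : G m} (hx : ∀ j < k, x j = 0) :
    psi m t x = 1 := by
  refine prod_eq_one fun j _ => ?_
  rcases lt_or_ge j k with hjk | hkj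
  · rw [rad_of_eq_zero (hx j hjk), one_pow]
  · rw [digit_eq_zero_of_lt (ht.trans_le (M_le_M hm hkj)), pow_zero]

end Characters

section RootsOfUnity

theorem sub_one_mul_sum_range_natCast_mul_pow {R : Type*} [CommRing R] (z : R) (k : ℕ) :
    (z - 1) * ∑ a ∈ range k, (a : R) * z ^ a = k * z ^ k - z * ∑ a ∈ range k, z ^ a := by
  induction k with
  | zero => simp
  | succ k ih =>
    rw [sum_range_succ, sum_range_succ (z ^ ·), mul_add, ih]
    push_cast
    ring

theorem half_le_norm_sum_range_natCast_mul_pow {ζ : ℂ} {m : ℕ} (hζ : IsPrimitiveRoot ζ m)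
    (hm : 1 < m) : (m : ℝ) / 2 ≤ ‖∑ a ∈ range m, (a : ℂ) * ζ ^ a‖ := by
  have hζ1 : ‖ζ‖ = 1 := hζ.norm'_eq_one (by omega)
  have hmul := sub_one_mul_sum_range_natCast_mul_pow ζ m
  rw [hζ.pow_eq_one, hζ.geom_sum_eq_zero hm, mul_zero, mul_one, sub_zero] at hmul
  have hnorm : ‖ζ - 1‖ * ‖∑ a ∈ range m, (a : ℂ) * ζ ^ a‖ = m := by
    rw [← norm_mul, hmul, Complex.norm_natCast]
  have hsub : ‖ζ - 1‖ ≤ 2 := (norm_sub_le _ _).trans (by rw [hζ1, norm_one]; norm_num)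
  nlinarith [norm_nonneg (∑ a ∈ range m, (a : ℂ) * ζ ^ a)]

theorem norm_exp_sub_one_le_norm_pow_sub_one {m d : ℕ} (hd : 1 ≤ d) (hdm : d < m) :
    ‖Complex.exp (2 * Real.pi * Complex.I / m) - 1‖
      ≤ ‖Complex.exp (2 * Real.pi * Complex.I / m) ^ d - 1‖ := by
  have hexp : ∀ c : ℕ, Complex.exp (2 * Real.pi * Complex.I / m) ^ c
      = Complex.exp (Complex.I * ((2 * (Real.pi * c / m) : ℝ) : ℂ)) := fun c => by
    rw [← Complex.exp_nat_mul]; push_cast; ring_nf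
  rw [hexp d, ← pow_one (Complex.exp (2 * Real.pi * Complex.I / m)), hexp 1,
    Complex.norm_exp_I_mul_ofReal_sub_one, Complex.norm_exp_I_mul_ofReal_sub_one]
  have hm : (0 : ℝ) < m := by norm_cast; omega
  have hd' : (1 : ℝ) ≤ d := by exact_mod_cast hd
  have hdm' : (d : ℝ) + 1 ≤ m := by exact_mod_cast hdm
  have hpi := Real.pi_pos
  have hsin1 : 0 ≤ Real.sin (Real.pi / m) :=
    Real.sin_nonneg_of_nonneg_of_le_pi (by positivity) (div_le_self hpi.le (by linarith))
  have hsind : Real.sin (Real.pi / m) ≤ Real.sin (Real.pi * d / m) := by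
    -- half the sum and half the difference of `π/m ≤ πd/m ≤ π - π/m` lie in `[0, π/2]`
    rw [← sub_nonneg, Real.sin_sub_sin]
    refine mul_nonneg (mul_nonneg zero_le_two (Real.sin_nonneg_of_nonneg_of_le_pi ?_ ?_))
      (Real.cos_nonneg_of_mem_Icc ⟨?_, ?_⟩)
    all_goals
      rw [← sub_nonneg]
      field_simp
      nlinarith
  simp only [mul_div_cancel_left₀ _ (two_ne_zero' ℝ), Nat.cast_one, mul_one, norm_mul,
    Real.norm_of_nonneg hsin1, Real.norm_of_nonneg (hsin1.trans hsind)]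
  gcongr

theorem one_le_norm_geom_sum_exp {m d : ℕ} (hd : 1 ≤ d) (hdm : d < m) :
    1 ≤ ‖∑ a ∈ range d, Complex.exp (2 * Real.pi * Complex.I / m) ^ a‖ := by
  have hζ := Complex.isPrimitiveRoot_exp m (by omega)
  have hne : Complex.exp (2 * Real.pi * Complex.I / m) - 1 ≠ 0 :=
    sub_ne_zero.mpr (hζ.ne_one (by omega))
  rw [geom_sum_eq (sub_ne_zero.mp hne), norm_div, one_le_div (norm_pos_iff.mpr hne)]
  exact norm_exp_sub_one_le_norm_pow_sub_one hd hdm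

end RootsOfUnity

section Fejer

variable {m : ℕ → ℕ}

theorem natCast_mul_norm_K (n : ℕ) (x : G m) :
    (n : ℝ) * ‖K m n x‖ = ‖∑ k ∈ range n, D m k x‖ := by
  rcases Nat.eq_zero_or_pos n with rfl | hn
  · simp
  · rw [K, norm_mul, norm_inv, Complex.norm_natCast, mul_inv_cancel_left₀ (by positivity)]

theorem apply_of_mem_cyl_e_add_e {k : ℕ} {x : G m}
    (hx : x ∈ cyl m (k + 2) (e m k + e m (k + 1))) :
    (∀ j < k, x j = 0) ∧ x k = 1 ∧ x (k + 1) = 1 := by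
  refine ⟨fun j hj => ?_, ?_, ?_⟩
  · rw [hx j (by omega)]; simp [e, hj.ne, (hj.trans (Nat.lt_succ_self k)).ne]
  · rw [hx k (by omega)]; simp [e]
  · rw [hx (k + 1) (by omega)]; simp [e]

theorem eq_mul_M_add_mod_of_digit_eq_zero {n k : ℕ} (hdk : digit m n k = 0) :
    n = (n / M m (k + 2) * m (k + 1) + digit m n (k + 1)) * m k * M m k + n % M m k := by
  have hM : n / M m (k + 1) = n / M m (k + 2) * m (k + 1) + digit m n (k + 1) := by
    rw [show M m (k + 2) = m (k + 1) * M m (k + 1) from rfl, mul_comm (m _),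
      ← Nat.div_div_eq_div_mul, digit, Nat.div_add_mod']
  have hMk : n / M m k = n / M m (k + 1) * m k := by
    rw [show M m (k + 1) = m k * M m k from rfl, mul_comm (m k), ← Nat.div_div_eq_div_mul]
    exact (Nat.div_mul_cancel (Nat.dvd_of_mod_eq_zero hdk)).symm
  rw [← hM, ← hMk, Nat.div_add_mod']

variable (hm : ∀ k, 2 ≤ m k)
include hm

theorem sum_D_eq_of_mem_cyl {k : ℕ} {x : G m} (hx : x ∈ cyl m (k + 2) (e m k + e m (k + 1)))
    (B : ℕ) {d r : ℕ} (hd : d ≤ m (k + 1)) (hr : r ≤ M m k) :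
    ∑ j ∈ range ((B * m (k + 1) + d) * m k * M m k + r), D m j x
      = (∑ t ∈ range r, (t : ℂ)) * psi m (M m k * ((B * m (k + 1) + d) * m k)) x
        - (M m k : ℂ) ^ 2 * ((∑ a ∈ range (m k), (a : ℂ) * rad m k x ^ a)
          * (psi m (M m (k + 2) * B) x * ∑ a ∈ range d, rad m (k + 1) x ^ a)) := by
  obtain ⟨hx0, hx1, hx2⟩ := apply_of_mem_cyl_e_add_e hx
  have hf : ∀ q, ∀ t < M m k, psi m (q * M m k + t) x = psi m (M m k * q) x := fun q t ht => by
    rw [add_comm, mul_comm q, psi_add_M_mul hm ht, psi_eq_one_of_lt hm ht hx0, one_mul]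
  have hz := (isPrimitiveRoot_rad (hm k) hx1).geom_sum_eq_zero (hm k)
  have hz' := (isPrimitiveRoot_rad (hm (k + 1)) hx2).geom_sum_eq_zero (hm (k + 1))
  have hsum_g : ∑ q ∈ range ((B * m (k + 1) + d) * m k), psi m (M m k * q) x = 0 := by
    simpa using sum_range_mul_add_of_eq_pow_mul (g := fun q => psi m (M m k * q) x)
      (fun b _ ha => psi_M_mul_add hm ha b x) hz (B * m (k + 1) + d) (Nat.zero_le _)
  simp only [D]
  rw [sum_range_sum_range_of_block_const (f := fun j => psi m j x) hf hr hsum_g,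
    sum_range_mul_natCast_mul_of_eq_pow_mul (g := fun q => psi m (M m k * q) x)
      (fun b _ ha => psi_M_mul_add hm ha b x) hz,
    sum_range_mul_add_of_eq_pow_mul (g := fun b => psi m (M m (k + 1) * b) x)
      (fun b _ ha => psi_M_mul_add hm ha b x) hz' B hd]

theorem sq_M_div_two_le_norm_sum_D {n k : ℕ} (hdk : digit m n k = 0)
    (hdk1 : digit m n (k + 1) ≠ 0) {x : G m} (hx : x ∈ cyl m (k + 2) (e m k + e m (k + 1))) :
    (M m k : ℝ) ^ 2 / 2 ≤ ‖∑ j ∈ range n, D m j x‖ := by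
  obtain ⟨-, hx1, hx2⟩ := apply_of_mem_cyl_e_add_e hx
  set P := M m k
  have hr : n % P ≤ P := (Nat.mod_lt n (M_pos hm k)).le
  have hd : digit m n (k + 1) < m (k + 1) := Nat.mod_lt _ (by have := hm (k + 1); omega)
  rw [eq_mul_M_add_mod_of_digit_eq_zero hdk, sum_D_eq_of_mem_cyl hm hx _ hd.le hr, norm_sub_rev]
  set A := ∑ t ∈ range (n % P), (t : ℂ)
  set u := psi m (P * ((n / M m (k + 2) * m (k + 1) + digit m n (k + 1)) * m k)) x
  set σ := ∑ a ∈ range (m k), (a : ℂ) * rad m k x ^ a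
  set T := psi m (M m (k + 2) * (n / M m (k + 2))) x
  set g := ∑ a ∈ range (digit m n (k + 1)), rad m (k + 1) x ^ a
  have htail : ‖A * u‖ ≤ (P : ℝ) ^ 2 / 2 := by
    have hgauss : (∑ t ∈ range (n % P), t) * 2 ≤ P ^ 2 := by
      rw [sum_range_id_mul_two, sq]
      exact Nat.mul_le_mul hr ((Nat.sub_le _ 1).trans hr)
    rw [norm_mul, norm_psi, mul_one, show A = ((∑ t ∈ range (n % P), t : ℕ) : ℂ) by simp [A],
      Complex.norm_natCast, le_div_iff₀ two_pos]
    exact_mod_cast hgauss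
  have hσ : 1 ≤ ‖σ‖ := by
    have := half_le_norm_sum_range_natCast_mul_pow (isPrimitiveRoot_rad (hm k) hx1) (hm k)
    have : (2 : ℝ) ≤ m k := by exact_mod_cast hm k
    linarith
  have hg : 1 ≤ ‖g‖ := by
    rw [show g = _ from congrArg (∑ a ∈ range _, · ^ a) (rad_of_eq_one (hm (k + 1)) hx2)]
    exact one_le_norm_geom_sum_exp (Nat.pos_of_ne_zero hdk1) hd
  have hmain : (P : ℝ) ^ 2 ≤ ‖(P : ℂ) ^ 2 * (σ * (T * g))‖ := by
    rw [norm_mul, norm_mul, norm_mul, norm_psi, one_mul, norm_pow, Complex.norm_natCast]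
    exact le_mul_of_one_le_right (by positivity) (one_le_mul_of_one_le_of_one_le hσ hg)
  linarith [norm_sub_norm_le ((P : ℂ) ^ 2 * (σ * (T * g))) (A * u)]

end Fejer

theorem add_two_le_of_lt {s : ℕ} {l u : ℕ → ℕ} (hlu : ∀ i ∈ Icc 1 s, l i ≤ u i)
    (hgap : ∀ i ∈ Icc 2 s, u (i - 1) + 2 ≤ l i) {a b : ℕ} (ha : 1 ≤ a) (hab : a < b)
    (hb : b ≤ s) : u a + 2 ≤ l b := by
  induction b, hab using Nat.le_induction with
  | base => simpa using hgap (a + 1) (mem_Icc.mpr ⟨by omega, hb⟩)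
  | succ b hab ih =>
    have h1 := ih (by omega)
    have h2 := hlu b (mem_Icc.mpr ⟨by omega, by omega⟩)
    have h3 := hgap (b + 1) (mem_Icc.mpr ⟨by omega, hb⟩)
    simp only [Nat.add_sub_cancel] at h3
    omega

theorem digit_sub_one_eq_zero_of_blocks {m : ℕ → ℕ} {n s : ℕ} {l u : ℕ → ℕ}
    (hlu : ∀ i ∈ Icc 1 s, l i ≤ u i) (hgap : ∀ i ∈ Icc 2 s, u (i - 1) + 2 ≤ l i)
    (hdigit : ∀ k, digit m n k ≠ 0 ↔ ∃ i ∈ Icc 1 s, l i ≤ k ∧ k ≤ u i) {i : ℕ} (hi : i ∈ Icc 1 s)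
    (hli : 1 ≤ l i) : digit m n (l i - 1) = 0 := by
  by_contra h
  obtain ⟨j, hj, hlj, hju⟩ := (hdigit _).mp h
  rcases lt_trichotomy j i with hji | rfl | hij
  · have := add_two_le_of_lt hlu hgap (mem_Icc.mp hj).1 hji (mem_Icc.mp hi).2
    omega
  · omega
  · have := add_two_le_of_lt hlu hgap (mem_Icc.mp hi).1 hij (mem_Icc.mp hj).2
    have := hlu i hi
    omega

/-- lower bound for the Fejér kernel on suitable cylinders, for `n` whose
nonzero digits come in blocks `[l_1, m_1], …, [l_s, m_s]` separated by gaps of length ≥ 2. -/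
theorem statement3 (lam : ℕ) :
    ∃ c : ℝ, 0 < c ∧ ∀ m : ℕ → ℕ, (∀ k, 2 ≤ m k) → (∀ k, m k ≤ lam) →
      ∀ n : ℕ, 1 ≤ n →
      ∀ s : ℕ, 1 ≤ s →
      ∀ l u : ℕ → ℕ,
        (∀ i ∈ Finset.Icc 1 s, l i ≤ u i) →
        (∀ i ∈ Finset.Icc 2 s, u (i - 1) + 2 ≤ l i) →
        (∀ k : ℕ, digit m n k ≠ 0 ↔ ∃ i ∈ Finset.Icc 1 s, l i ≤ k ∧ k ≤ u i) →
        ∀ i ∈ Finset.Icc 1 s, 1 ≤ l i →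
          ∀ x ∈ cyl m (l i + 1) (e m (l i - 1) + e m (l i)),
            c * (M m (l i) : ℝ) ^ 2 ≤ (n : ℝ) * ‖K m n x‖ := by
  refine ⟨((2 : ℝ) * (lam + 1) ^ 2)⁻¹, by positivity, ?_⟩
  intro m hm hlam n _ s _ l u hlu hgap hdigit i hi hli x hx
  have hd0 := digit_sub_one_eq_zero_of_blocks hlu hgap hdigit hi hli
  have hd1 : digit m n (l i) ≠ 0 := (hdigit _).mpr ⟨i, hi, le_rfl, hlu i hi⟩
  obtain ⟨k, hk⟩ : ∃ k, l i = k + 1 := ⟨l i - 1, by omega⟩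
  rw [hk, Nat.add_sub_cancel] at hd0 hx
  rw [hk] at hd1 ⊢
  have hmk : (m k : ℝ) ≤ lam + 1 := by exact_mod_cast (hlam k).trans (Nat.le_succ lam)
  rw [natCast_mul_norm_K, show (M m (k + 1) : ℝ) = m k * M m k by simp [M]]
  calc ((2 : ℝ) * (lam + 1) ^ 2)⁻¹ * ((m k : ℝ) * M m k) ^ 2
      ≤ ((2 : ℝ) * (lam + 1) ^ 2)⁻¹ * (((lam : ℝ) + 1) * M m k) ^ 2 := by gcongr
    _ = (M m k : ℝ) ^ 2 / 2 := by field_simp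
    _ ≤ _ := sq_M_div_two_le_norm_sum_D hm hd0 hd1 hx

end Vilenkin

end
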